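/- arXiv:2509.09277 — 4 statements merged into one kernel-verified Lean document; each statement's English description precedes it below -/
import Mathlib

section
/- Suppose f : ℝ² × ℝ → ℝ² is continuously differentiable in x, and there exists c > 0 such that for all (x,t) and all v ∈ ℝ², vᵀ (∂f/∂x)(x,t) v ≤ −c‖v‖². If x₁, x₂ : ℝ → ℝ² are two solutions of ẋ = f(x,t), then ‖x₁(t) − x₂(t)‖ ≤ e^{−ct}‖x₁(0) − x₂(0)‖ for all t ≥ 0. -/
open Real
open scoped RealInnerProductSpace

/-! By the mean value theorem on the segment from `x₂ t` to `x₁ t`, the Jacobian bound gives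
`⟪f x₁ t - f x₂ t, x₁ t - x₂ t⟫ ≤ -c ‖x₁ t - x₂ t‖²`. Hence the squared distance
`u = ‖x₁ - x₂‖²` satisfies `u' ≤ -2c u`, so `exp (2ct) u(t)` is non-increasing. -/

theorem le_exp_mul_mul_of_hasDerivAt_le_mul {u u' : ℝ → ℝ} {K : ℝ}
    (hu : ∀ s, HasDerivAt u (u' s) s) (hbound : ∀ s, u' s ≤ K * u s) {t : ℝ} (ht : 0 ≤ t) :
    u t ≤ exp (K * t) * u 0 := by
  have hw : ∀ s, HasDerivAt (fun s => exp (-K * s) * u s)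
      (exp (-K * s) * (u' s - K * u s)) s := fun s =>
    (((hasDerivAt_id s).const_mul (-K)).exp.mul (hu s)).congr_deriv (by simp only [id]; ring)
  have hanti := antitone_of_hasDerivAt_nonpos hw fun s =>
    mul_nonpos_of_nonneg_of_nonpos (exp_pos _).le (sub_nonpos.2 (hbound s))
  have hwt : exp (-K * t) * u t ≤ u 0 := by simpa using hanti ht
  calc u t = exp (K * t) * (exp (-K * t) * u t) := by
        rw [← mul_assoc, ← exp_add]; simp
    _ ≤ exp (K * t) * u 0 := by gcongr

section InnerProductSpace

variable {E : Type*} [NormedAddCommGroup E] [InnerProductSpace ℝ E]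

theorem norm_le_exp_mul_norm_of_inner_deriv_le {e e' : ℝ → E} {c : ℝ}
    (he : ∀ s, HasDerivAt e (e' s) s) (hbound : ∀ s, ⟪e' s, e s⟫ ≤ -c * ‖e s‖ ^ 2)
    {t : ℝ} (ht : 0 ≤ t) : ‖e t‖ ≤ exp (-c * t) * ‖e 0‖ := by
  have hsq : ‖e t‖ ^ 2 ≤ exp (-2 * c * t) * ‖e 0‖ ^ 2 := by
    refine le_exp_mul_mul_of_hasDerivAt_le_mul (fun s => (he s).norm_sq) (fun s => ?_) ht
    rw [real_inner_comm]
    linarith [hbound s]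
  have hexp : exp (-2 * c * t) = exp (-c * t) ^ 2 := by rw [← exp_nat_mul]; ring_nf
  rw [hexp, ← mul_pow] at hsq
  exact (pow_le_pow_iff_left₀ (norm_nonneg _) (by positivity) two_ne_zero).1 hsq

theorem inner_sub_le_of_inner_fderiv_le {g : E → E} (hg : Differentiable ℝ g) {c : ℝ}
    (hbound : ∀ x v, ⟪fderiv ℝ g x v, v⟫ ≤ -c * ‖v‖ ^ 2) (x y : E) :
    ⟪g x - g y, x - y⟫ ≤ -c * ‖x - y‖ ^ 2 := by
  obtain ⟨z, -, hz⟩ := domain_mvt (f := fun z => ⟪x - y, g z⟫) (s := Set.univ)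
    (fun z _ => ((innerSL ℝ (x - y)).hasFDerivAt.comp z (hg z).hasFDerivAt).hasFDerivWithinAt)
    convex_univ (Set.mem_univ y) (Set.mem_univ x)
  simp only [ContinuousLinearMap.comp_apply, innerSL_apply_apply] at hz
  rw [real_inner_comm, inner_sub_right, hz, real_inner_comm]
  exact hbound z (x - y)

end InnerProductSpace

theorem contraction_euclidean_metric_general
    (c : ℝ)
    (f : EuclideanSpace ℝ (Fin 2) → ℝ → EuclideanSpace ℝ (Fin 2))
    (hf : ∀ t : ℝ, ContDiff ℝ 1 (fun y => f y t))
    (hjac : ∀ (x : EuclideanSpace ℝ (Fin 2)) (t : ℝ) (v : EuclideanSpace ℝ (Fin 2)),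
      ⟪fderiv ℝ (fun y => f y t) x v, v⟫ ≤ -c * ‖v‖ ^ 2)
    (x₁ x₂ : ℝ → EuclideanSpace ℝ (Fin 2))
    (hx₁ : ∀ t : ℝ, HasDerivAt x₁ (f (x₁ t) t) t)
    (hx₂ : ∀ t : ℝ, HasDerivAt x₂ (f (x₂ t) t) t) :
    ∀ t : ℝ, 0 ≤ t → ‖x₁ t - x₂ t‖ ≤ Real.exp (-c * t) * ‖x₁ 0 - x₂ 0‖ := by
  intro t ht
  refine norm_le_exp_mul_norm_of_inner_deriv_le (fun s => (hx₁ s).sub (hx₂ s)) (fun s => ?_) ht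
  exact inner_sub_le_of_inner_fderiv_le ((hf s).differentiable one_ne_zero)
    (fun x v => hjac x s v) (x₁ s) (x₂ s)

theorem contraction_euclidean_metric
    (c : ℝ) (hc : 0 < c)
    (f : EuclideanSpace ℝ (Fin 2) → ℝ → EuclideanSpace ℝ (Fin 2))
    (hf : ∀ t : ℝ, ContDiff ℝ 1 (fun y => f y t))
    (hjac : ∀ (x : EuclideanSpace ℝ (Fin 2)) (t : ℝ) (v : EuclideanSpace ℝ (Fin 2)),
      ⟪fderiv ℝ (fun y => f y t) x v, v⟫ ≤ -c * ‖v‖ ^ 2)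
    (x₁ x₂ : ℝ → EuclideanSpace ℝ (Fin 2))
    (hx₁ : ∀ t : ℝ, HasDerivAt x₁ (f (x₁ t) t) t)
    (hx₂ : ∀ t : ℝ, HasDerivAt x₂ (f (x₂ t) t) t) :
    ∀ t : ℝ, 0 ≤ t → ‖x₁ t - x₂ t‖ ≤ Real.exp (-c * t) * ‖x₁ 0 - x₂ 0‖ :=
  contraction_euclidean_metric_general c f hf hjac x₁ x₂ hx₁ hx₂
end

section
/- Suppose f : ℝⁿ × ℝ → ℝⁿ satisfies ⟨f(x,t) − f(y,t), x − y⟩ ≤ −c‖x − y‖² for all x, y, t with c > 0 (one-sided Lipschitz/contracting condition), and let d : ℝⁿ × ℝ → ℝⁿ satisfy ‖d(x,t)‖ ≤ d̄ for all (x,t). If x solves ẋ = f(x,t) + d(x,t) and y solves ẏ = f(y,t), then ‖x(t) − y(t)‖ ≤ e^{−ct}‖x(0) − y(0)‖ + (d̄/c)(1 − e^{−ct}) for all t ≥ 0; in particular the separation is ultimately bounded by d̄/c. -/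
open Real Filter Set Topology
open scoped RealInnerProductSpace

/-!
Along the two trajectories the error `e = x - y` satisfies `⟪ė, e⟫ ≤ (-c‖e‖ + d̄)‖e‖`, so the upper
right Dini derivative of `‖e‖` is at most `-c‖e‖ + d̄`; where `e` vanishes, `‖e‖` is not
differentiable, but its right slope tends to `‖ė‖ = ‖d‖ ≤ d̄`. Grönwall's comparison lemma for
Dini derivatives then bounds `‖e‖` by the solution of `u̇ = -c u + d̄`.
-/

section NormDerivative

variable {F : Type*} [NormedAddCommGroup F] [InnerProductSpace ℝ F] {e : ℝ → F} {e' : F} {s : ℝ}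

theorem HasDerivAt.norm_of_ne_zero (he : HasDerivAt e e' s) (h0 : e s ≠ 0) :
    HasDerivAt (‖e ·‖) (⟪e s, e'⟫ / ‖e s‖) s := by
  have hsq : HasDerivAt (fun t => √(‖e t‖ ^ 2)) (2 * ⟪e s, e'⟫ / (2 * √(‖e s‖ ^ 2))) s :=
    he.norm_sq.sqrt (by positivity)
  simp only [Real.sqrt_sq (norm_nonneg _)] at hsq
  convert hsq using 1
  field_simp

theorem HasDerivAt.frequently_right_slope_norm_lt {B r : ℝ} (he : HasDerivAt e e' s)
    (hB : ⟪e', e s⟫ ≤ B * ‖e s‖) (h0 : e s = 0 → ‖e'‖ ≤ B) (hr : B < r) :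
    ∃ᶠ z in 𝓝[>] s, (z - s)⁻¹ * (‖e z‖ - ‖e s‖) < r := by
  by_cases hes : e s = 0
  · exact he.hasDerivWithinAt.liminf_right_slope_norm_le ((h0 hes).trans_lt hr)
  · have hpos : 0 < ‖e s‖ := norm_pos_iff.mpr hes
    have hD : ⟪e s, e'⟫ / ‖e s‖ ≤ B := by
      rw [div_le_iff₀ hpos, real_inner_comm]
      exact hB
    simpa only [slope_def_field, div_eq_inv_mul] using
      ((he.norm_of_ne_zero hes).hasDerivWithinAt (s := Ici s)).liminf_right_slope_le
        (hD.trans_lt hr)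

end NormDerivative

theorem gronwallBound_neg_eq {δ c ε : ℝ} (hc : c ≠ 0) (t : ℝ) :
    gronwallBound δ (-c) ε t = exp (-c * t) * δ + ε / c * (1 - exp (-c * t)) := by
  rw [gronwallBound_of_K_ne_0 (neg_ne_zero.mpr hc), div_neg]
  ring

theorem inner_add_sub_le_of_contracting {F : Type*} [NormedAddCommGroup F] [InnerProductSpace ℝ F]
    {u v w p : F} {c pbar : ℝ} (hf : ⟪u - v, w⟫ ≤ -c * ‖w‖ ^ 2) (hp : ‖p‖ ≤ pbar) :
    ⟪u + p - v, w⟫ ≤ (-c * ‖w‖ + pbar) * ‖w‖ := by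
  have hpw : ⟪p, w⟫ ≤ pbar * ‖w‖ :=
    (real_inner_le_norm p w).trans (mul_le_mul_of_nonneg_right hp (norm_nonneg w))
  rw [add_sub_right_comm, inner_add_left]
  linarith

theorem contraction_robustness_error_ball
    (n : ℕ) (c dbar : ℝ) (hc : 0 < c)
    (f d : EuclideanSpace ℝ (Fin n) → ℝ → EuclideanSpace ℝ (Fin n))
    (hf : ∀ (x y : EuclideanSpace ℝ (Fin n)) (t : ℝ),
      ⟪f x t - f y t, x - y⟫ ≤ -c * ‖x - y‖ ^ 2)
    (hd : ∀ (x : EuclideanSpace ℝ (Fin n)) (t : ℝ), ‖d x t‖ ≤ dbar)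
    (x y : ℝ → EuclideanSpace ℝ (Fin n))
    (hx : ∀ t : ℝ, HasDerivAt x (f (x t) t + d (x t) t) t)
    (hy : ∀ t : ℝ, HasDerivAt y (f (y t) t) t) :
    ∀ t : ℝ, 0 ≤ t →
      ‖x t - y t‖ ≤ Real.exp (-c * t) * ‖x 0 - y 0‖
        + (dbar / c) * (1 - Real.exp (-c * t)) := by
  intro T hT
  have he : ∀ t, HasDerivAt (fun t => x t - y t) (f (x t) t + d (x t) t - f (y t) t) t :=
    fun t => (hx t).sub (hy t)
  have hdini : ∀ s, ∀ r, -c * ‖x s - y s‖ + dbar < r →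
      ∃ᶠ z in 𝓝[>] s, (z - s)⁻¹ * (‖x z - y z‖ - ‖x s - y s‖) < r := by
    intro s r hr
    refine (he s).frequently_right_slope_norm_lt
      (inner_add_sub_le_of_contracting (hf _ _ s) (hd _ s)) (fun h0 => ?_) hr
    rw [sub_eq_zero.mp h0, add_sub_cancel_left, sub_self, norm_zero, mul_zero, zero_add]
    exact hd _ s
  have hcont : ContinuousOn (fun t => ‖x t - y t‖) (Icc 0 T) :=
    (continuous_iff_continuousAt.mpr fun t => (he t).continuousAt).norm.continuousOn
  have hG := le_gronwallBound_of_liminf_deriv_right_le hcont (fun s _ => hdini s) le_rfl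
    (fun _ _ => le_rfl) T ⟨hT, le_rfl⟩
  rwa [sub_zero, gronwallBound_neg_eq hc.ne'] at hG
end

section
/- Let x₁, x₂ : [0,∞) → ℝ² solve ẋ_k = (χ(x_k) − κβ)x_k + ω₀ J x_k + u(t) for a common continuous input u, with χ(x) = ξ(2X² − ‖x‖²), ξ > 0, and J = [[0,−1],[1,0]]. If κβ − 2ξX² ≥ c > 0, then ‖x₁(t) − x₂(t)‖ ≤ e^{−ct}‖x₁(0) − x₂(0)‖ for all t ≥ 0. -/
open Matrix

noncomputable def eunorm2 (v : Fin 2 → ℝ) : ℝ :=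
  Real.sqrt ((v 0) ^ 2 + (v 1) ^ 2)

/-!
Contraction argument. Write `f` for the dVOC vector field. The common input `u` cancels in
`f x - f y`, the rotation `ω₀ J` is skew and so does not contribute to `⟪f x - f y, x - y⟫`, and
the cubic term `-ξ ‖x‖² x` is monotone decreasing, because by Cauchy–Schwarz
`⟪‖x‖² x - ‖y‖² y, x - y⟫ ≥ (‖x‖ - ‖y‖)² (‖x‖² + ‖x‖ ‖y‖ + ‖y‖²)`.
Hence `⟪f x - f y, x - y⟫ ≤ -(κβ - 2ξX²) ‖x - y‖²`, so `V = ‖x₁ - x₂‖²` obeys `V' ≤ -2cV`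
and Grönwall's inequality gives `V t ≤ e^{-2ct} V 0`.
-/

open Real
open scoped InnerProductSpace

theorem le_exp_mul_mul_of_hasDerivAt_le {V V' : ℝ → ℝ} {a t : ℝ}
    (hV : ∀ s, HasDerivAt V (V' s) s) (hle : ∀ s, V' s ≤ a * V s) (ht : 0 ≤ t) :
    V t ≤ exp (a * t) * V 0 := by
  have := le_gronwallBound_of_liminf_deriv_right_le (f := V) (δ := V 0) (K := a) (ε := 0)
    (a := 0) (b := t) (fun s _ => (hV s).continuousAt.continuousWithinAt)
    (fun s _ _ hr => (hV s).hasDerivWithinAt.liminf_right_slope_le hr) le_rfl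
    (fun s _ => by simpa using hle s) t ⟨ht, le_rfl⟩
  simpa [gronwallBound_ε0, mul_comm] using this

section
variable {E : Type*} [NormedAddCommGroup E] [InnerProductSpace ℝ E]

theorem norm_sub_le_exp_mul_of_inner_sub_le {F : ℝ → E → E} {c : ℝ}
    (hF : ∀ t x y, ⟪F t x - F t y, x - y⟫_ℝ ≤ -c * ‖x - y‖ ^ 2) {x₁ x₂ : ℝ → E}
    (hx₁ : ∀ t, HasDerivAt x₁ (F t (x₁ t)) t) (hx₂ : ∀ t, HasDerivAt x₂ (F t (x₂ t)) t)
    {t : ℝ} (ht : 0 ≤ t) :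
    ‖x₁ t - x₂ t‖ ≤ exp (-c * t) * ‖x₁ 0 - x₂ 0‖ := by
  have hsq : ‖x₁ t - x₂ t‖ ^ 2 ≤ exp (-2 * c * t) * ‖x₁ 0 - x₂ 0‖ ^ 2 := by
    refine le_exp_mul_mul_of_hasDerivAt_le (V := fun s => ‖x₁ s - x₂ s‖ ^ 2)
      (fun s => ((hx₁ s).sub (hx₂ s)).norm_sq) (fun s => ?_) ht
    rw [Pi.sub_apply, real_inner_comm]
    linarith [hF s (x₁ s) (x₂ s)]
  have hexp : exp (-2 * c * t) = exp (-c * t) ^ 2 := by rw [← exp_nat_mul]; ring_nf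
  rw [hexp, ← mul_pow] at hsq
  exact (pow_le_pow_iff_left₀ (norm_nonneg _) (by positivity) two_ne_zero).mp hsq

theorem inner_norm_sq_smul_sub_norm_sq_smul_nonneg (x y : E) :
    0 ≤ ⟪‖x‖ ^ 2 • x - ‖y‖ ^ 2 • y, x - y⟫_ℝ := by
  have hxy := real_inner_le_norm x y
  simp only [inner_sub_left, inner_sub_right, real_inner_smul_left, real_inner_self_eq_norm_sq,
    real_inner_comm x y]
  nlinarith [mul_le_mul_of_nonneg_left hxy (add_nonneg (sq_nonneg ‖x‖) (sq_nonneg ‖y‖)),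
    norm_nonneg x, norm_nonneg y, sq_nonneg (‖x‖ - ‖y‖), mul_nonneg (norm_nonneg x) (norm_nonneg y)]

noncomputable def dvocField (ξ X κ β ω₀ : ℝ) (J : E →ₗ[ℝ] E) (u x : E) : E :=
  (ξ * (2 * X ^ 2 - ‖x‖ ^ 2) - κ * β) • x + ω₀ • J x + u

theorem inner_dvocField_sub_le {ξ X κ β ω₀ : ℝ} (hξ : 0 ≤ ξ) {J : E →ₗ[ℝ] E}
    (hJ : ∀ v, ⟪J v, v⟫_ℝ = 0) (u x y : E) :
    ⟪dvocField ξ X κ β ω₀ J u x - dvocField ξ X κ β ω₀ J u y, x - y⟫_ℝ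
      ≤ -(κ * β - 2 * ξ * X ^ 2) * ‖x - y‖ ^ 2 := by
  have hsplit : dvocField ξ X κ β ω₀ J u x - dvocField ξ X κ β ω₀ J u y
      = (2 * ξ * X ^ 2 - κ * β) • (x - y) - ξ • (‖x‖ ^ 2 • x - ‖y‖ ^ 2 • y) + ω₀ • J (x - y) := by
    rw [dvocField, dvocField, map_sub]
    module
  rw [hsplit, inner_add_left, inner_sub_left, real_inner_smul_left, real_inner_smul_left,
    real_inner_smul_left, hJ, real_inner_self_eq_norm_sq]
  nlinarith [mul_nonneg hξ (inner_norm_sq_smul_sub_norm_sq_smul_nonneg x y)]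
end

theorem inner_toLpLin_rotation_self (v : EuclideanSpace ℝ (Fin 2)) :
    ⟪Matrix.toLpLin 2 2 !![(0 : ℝ), -1; 1, 0] v, v⟫_ℝ = 0 := by
  simp [Matrix.toLpLin_apply, PiLp.inner_apply, Fin.sum_univ_two, dotProduct, mul_comm]

theorem HasDerivAt.toLp {ι : Type*} [Fintype ι] (p : ENNReal) [Fact (1 ≤ p)]
    {f : ℝ → ι → ℝ} {f' : ι → ℝ} {t : ℝ} (hf : HasDerivAt f f' t) :
    HasDerivAt (fun s => WithLp.toLp p (f s)) (WithLp.toLp p f') t :=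
  (PiLp.hasFDerivAt_toLp p (f t)).comp_hasDerivAt t hf

theorem eunorm2_eq_norm_toLp (v : Fin 2 → ℝ) : eunorm2 v = ‖WithLp.toLp 2 v‖ := by
  simp [eunorm2, EuclideanSpace.norm_eq, Fin.sum_univ_two]

theorem toLp_dvoc (ξ X κ β ω₀ : ℝ) (J : Matrix (Fin 2) (Fin 2) ℝ) (u x : Fin 2 → ℝ) :
    WithLp.toLp 2 ((ξ * (2 * X ^ 2 - (x 0 ^ 2 + x 1 ^ 2)) - κ * β) • x + ω₀ • J *ᵥ x + u)
      = dvocField ξ X κ β ω₀ (Matrix.toLpLin 2 2 J) (WithLp.toLp 2 u) (WithLp.toLp 2 x) := by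
  rw [dvocField, EuclideanSpace.real_norm_sq_eq, Fin.sum_univ_two, WithLp.toLp_add,
    WithLp.toLp_add, WithLp.toLp_smul, WithLp.toLp_smul, Matrix.toLpLin_toLp]
  rfl

theorem dvoc_synchronization_certificate_general
    (ξ X κ β ω₀ c : ℝ) (hξ : 0 < ξ)
    (hcond : κ * β - 2 * ξ * X ^ 2 ≥ c)
    (J : Matrix (Fin 2) (Fin 2) ℝ) (hJ : J = !![0, -1; 1, 0])
    (χ : (Fin 2 → ℝ) → ℝ)
    (hχ : χ = fun y => ξ * (2 * X ^ 2 - ((y 0) ^ 2 + (y 1) ^ 2)))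
    (u : ℝ → Fin 2 → ℝ)
    (x₁ x₂ : ℝ → Fin 2 → ℝ)
    (hx₁ : ∀ (t : ℝ) (i : Fin 2), HasDerivAt (fun s => x₁ s i)
      (((χ (x₁ t) - κ * β) • x₁ t + ω₀ • J.mulVec (x₁ t) + u t) i) t)
    (hx₂ : ∀ (t : ℝ) (i : Fin 2), HasDerivAt (fun s => x₂ s i)
      (((χ (x₂ t) - κ * β) • x₂ t + ω₀ • J.mulVec (x₂ t) + u t) i) t) :
    ∀ t : ℝ, 0 ≤ t →
      eunorm2 (x₁ t - x₂ t) ≤ Real.exp (-c * t) * eunorm2 (x₁ 0 - x₂ 0) := by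
  intro t ht
  subst hJ hχ
  set F : ℝ → EuclideanSpace ℝ (Fin 2) → EuclideanSpace ℝ (Fin 2) := fun s =>
    dvocField ξ X κ β ω₀ (Matrix.toLpLin 2 2 !![0, -1; 1, 0]) (WithLp.toLp 2 (u s))
  have hsol : ∀ x : ℝ → Fin 2 → ℝ, (∀ s i, HasDerivAt (fun s => x s i)
      (((ξ * (2 * X ^ 2 - (x s 0 ^ 2 + x s 1 ^ 2)) - κ * β) • x s
        + ω₀ • !![0, -1; 1, 0] *ᵥ x s + u s) i) s) →
      ∀ s, HasDerivAt (fun s => WithLp.toLp 2 (x s)) (F s (WithLp.toLp 2 (x s))) s := by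
    intro x hx s
    simpa only [F, toLp_dvoc] using (hasDerivAt_pi.2 (hx s)).toLp 2
  have hcontract : ∀ s x y, ⟪F s x - F s y, x - y⟫_ℝ ≤ -c * ‖x - y‖ ^ 2 := fun s x y =>
    (inner_dvocField_sub_le hξ.le inner_toLpLin_rotation_self _ x y).trans
      (mul_le_mul_of_nonneg_right (by linarith) (sq_nonneg _))
  simpa [eunorm2_eq_norm_toLp] using
    norm_sub_le_exp_mul_of_inner_sub_le hcontract (hsol x₁ hx₁) (hsol x₂ hx₂) ht

theorem dvoc_synchronization_certificate
    (ξ X κ β ω₀ c : ℝ) (hξ : 0 < ξ)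
    (hcond : κ * β - 2 * ξ * X ^ 2 ≥ c) (hc : 0 < c)
    (J : Matrix (Fin 2) (Fin 2) ℝ) (hJ : J = !![0, -1; 1, 0])
    (χ : (Fin 2 → ℝ) → ℝ)
    (hχ : χ = fun y => ξ * (2 * X ^ 2 - ((y 0) ^ 2 + (y 1) ^ 2)))
    (u : ℝ → Fin 2 → ℝ) (hu : Continuous u)
    (x₁ x₂ : ℝ → Fin 2 → ℝ)
    (hx₁ : ∀ (t : ℝ) (i : Fin 2), HasDerivAt (fun s => x₁ s i)
      (((χ (x₁ t) - κ * β) • x₁ t + ω₀ • J.mulVec (x₁ t) + u t) i) t)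
    (hx₂ : ∀ (t : ℝ) (i : Fin 2), HasDerivAt (fun s => x₂ s i)
      (((χ (x₂ t) - κ * β) • x₂ t + ω₀ • J.mulVec (x₂ t) + u t) i) t) :
    ∀ t : ℝ, 0 ≤ t →
      eunorm2 (x₁ t - x₂ t) ≤ Real.exp (-c * t) * eunorm2 (x₁ 0 - x₂ 0) :=
  dvoc_synchronization_certificate_general ξ X κ β ω₀ c hξ hcond J hJ χ hχ u x₁ x₂ hx₁ hx₂
end

section
/- Let h(x) = (χ(x) − a)x + ω₀ J x on ℝ² with χ(x) = ξ(2X² − ‖x‖²), ξ > 0, a ∈ ℝ, J = [[0,−1],[1,0]]. Then for all x, y ∈ ℝ², ⟨h(x) − h(y), x − y⟩ ≤ (2ξX² − a)·‖x − y‖². In particular, if a > 2ξX², h is one-sided Lipschitz with negative constant. -/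
open Matrix

/- The cubic term `‖x‖² x` is monotone (it is the gradient of the convex function `‖x‖⁴ / 4`),
the rotation `J` is skew and so contributes nothing to `⟨h x - h y, x - y⟩`, and what remains
is the linear part `(2ξX² - a) x`. -/

variable {n : Type*} [Fintype n]

lemma mulVec_dotProduct_self_eq_zero {J : Matrix n n ℝ} (hJ : Jᵀ = -J) (v : n → ℝ) :
    (J *ᵥ v) ⬝ᵥ v = 0 := by
  have hneg : (J *ᵥ v) ⬝ᵥ v = -((J *ᵥ v) ⬝ᵥ v) := calc
    (J *ᵥ v) ⬝ᵥ v = v ⬝ᵥ (J *ᵥ v) := dotProduct_comm _ _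
    _ = (Jᵀ *ᵥ v) ⬝ᵥ v := by rw [dotProduct_mulVec, mulVec_transpose]
    _ = -((J *ᵥ v) ⬝ᵥ v) := by rw [hJ, neg_mulVec, neg_dotProduct]
  linarith

lemma two_mul_smul_self_sub_dotProduct (x y : n → ℝ) :
    2 * (((x ⬝ᵥ x) • x - (y ⬝ᵥ y) • y) ⬝ᵥ (x - y)) =
      (x ⬝ᵥ x - y ⬝ᵥ y) ^ 2 + (x ⬝ᵥ x + y ⬝ᵥ y) * ((x - y) ⬝ᵥ (x - y)) := by
  simp only [sub_dotProduct, dotProduct_sub, smul_dotProduct, smul_eq_mul, dotProduct_comm y x]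
  ring

lemma smul_self_sub_dotProduct_nonneg (x y : n → ℝ) :
    0 ≤ ((x ⬝ᵥ x) • x - (y ⬝ᵥ y) • y) ⬝ᵥ (x - y) := by
  have hsq (v : n → ℝ) : 0 ≤ v ⬝ᵥ v := Finset.sum_nonneg fun i _ => mul_self_nonneg (v i)
  have := two_mul_smul_self_sub_dotProduct x y
  nlinarith [sq_nonneg (x ⬝ᵥ x - y ⬝ᵥ y), mul_nonneg (add_nonneg (hsq x) (hsq y)) (hsq (x - y))]

lemma dotProduct_sub_le_of_transpose_eq_neg (c ξ ω : ℝ) (hξ : 0 ≤ ξ) {J : Matrix n n ℝ}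
    (hJ : Jᵀ = -J) (x y : n → ℝ) :
    (((c - ξ * (x ⬝ᵥ x)) • x + ω • J *ᵥ x) - ((c - ξ * (y ⬝ᵥ y)) • y + ω • J *ᵥ y)) ⬝ᵥ (x - y)
      ≤ c * ((x - y) ⬝ᵥ (x - y)) := by
  have hsplit :
      (((c - ξ * (x ⬝ᵥ x)) • x + ω • J *ᵥ x) - ((c - ξ * (y ⬝ᵥ y)) • y + ω • J *ᵥ y)) ⬝ᵥ (x - y)
        = c * ((x - y) ⬝ᵥ (x - y)) - ξ * (((x ⬝ᵥ x) • x - (y ⬝ᵥ y) • y) ⬝ᵥ (x - y))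
          + ω * ((J *ᵥ (x - y)) ⬝ᵥ (x - y)) := by
    simp only [mulVec_sub, sub_dotProduct, add_dotProduct, smul_dotProduct, sub_smul,
      smul_eq_mul, mul_smul]
    ring
  rw [hsplit, mulVec_dotProduct_self_eq_zero hJ, mul_zero, add_zero]
  linarith [mul_nonneg hξ (smul_self_sub_dotProduct_nonneg x y)]

theorem dvoc_one_sided_lipschitz
    (ξ X a ω₀ : ℝ) (hξ : 0 < ξ)
    (J : Matrix (Fin 2) (Fin 2) ℝ) (hJ : J = !![0, -1; 1, 0])
    (χ : (Fin 2 → ℝ) → ℝ)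
    (hχ : χ = fun y => ξ * (2 * X ^ 2 - ((y 0) ^ 2 + (y 1) ^ 2)))
    (h : (Fin 2 → ℝ) → Fin 2 → ℝ)
    (hh : h = fun y => (χ y - a) • y + ω₀ • J.mulVec y) :
    ∀ x y : Fin 2 → ℝ,
      (h x - h y) ⬝ᵥ (x - y) ≤ (2 * ξ * X ^ 2 - a) * ((x - y) ⬝ᵥ (x - y)) := by
  have hskew : Jᵀ = -J := by
    subst hJ
    ext i j
    fin_cases i <;> fin_cases j <;> simp
  have hform : h = fun v => ((2 * ξ * X ^ 2 - a) - ξ * (v ⬝ᵥ v)) • v + ω₀ • J *ᵥ v := by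
    subst hh hχ
    funext v
    simp only [dotProduct, Fin.sum_univ_two, ← sq]
    ring_nf
  intro x y
  rw [hform]
  exact dotProduct_sub_le_of_transpose_eq_neg _ ξ ω₀ hξ.le hskew x y
end
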